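/- arXiv:2601.19379 — 2 statements merged into one kernel-verified Lean document; each statement's English description precedes it below -/
import Mathlib

section
/- For every integer d ≥ 1 and every x ∈ ℝ^d, the gradient of the chain function satisfies ‖∇H_d(x)‖_∞ ≤ 23, where ‖·‖_∞ denotes the supremum norm on ℝ^d. -/
/-- `Ψ(t) = 0` for `t ≤ 1/2` and `Ψ(t) = exp(1 − 1/(2t−1)²)` for `t > 1/2`. -/
noncomputable def Psi (t : ℝ) : ℝ :=
  if t ≤ 1 / 2 then 0 else Real.exp (1 - 1 / (2 * t - 1) ^ 2)

/-- `Φ(t) = √e ∫_{−∞}^{t} exp(−τ²/2) dτ`. -/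
noncomputable def Phi (t : ℝ) : ℝ :=
  Real.sqrt (Real.exp 1) * ∫ τ in Set.Iic t, Real.exp (-τ ^ 2 / 2)

/-- The `i`-th coordinate (1-based, `1 ≤ i ≤ d`) of a vector in `ℝ^d`;
zero when out of range. -/
noncomputable def coord (d : ℕ) (y : EuclideanSpace ℝ (Fin d)) (i : ℕ) : ℝ :=
  if h : i - 1 < d then y ⟨i - 1, h⟩ else 0

/-- The chain function
`H_d(x) = −Ψ(1)Φ(x₁) + ∑_{i=2}^d (Ψ(−x_{i−1})Φ(−x_i) − Ψ(x_{i−1})Φ(x_i))`. -/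
noncomputable def Hchain (d : ℕ) (y : EuclideanSpace ℝ (Fin d)) : ℝ :=
  -Psi 1 * Phi (coord d y 1) +
    ∑ i ∈ Finset.Icc 2 d,
      (Psi (-coord d y (i - 1)) * Phi (-coord d y i) -
        Psi (coord d y (i - 1)) * Phi (coord d y i))

open Classical in
/-- The progress index `prog_a(x) = max({i ∈ {1,…,d} : |x_i| > a} ∪ {0})`. -/
noncomputable def prog (d : ℕ) (a : ℝ) (y : EuclideanSpace ℝ (Fin d)) : ℕ :=
  ((Finset.Icc 1 d).filter fun i => a < |coord d y i|).sup id

/-!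
The `j`-th partial derivative of `H_d` receives one term from the summand in which `x_j` sits in
the `Ψ` slot, and one from the summand (or from `−Ψ(1)Φ(x₁)` when `j = 1`) in which it sits in
the `Φ` slot. As `Ψ` vanishes on `(−∞, 1/2]`, at most one half of `Ψ(−a)Φ(−b) − Ψ(a)Φ(b)`
contributes to each partial derivative, so the two terms are bounded by `sup Ψ' · sup Φ` and
`sup Ψ · sup Φ'`, i.e. by `√(54/e) · √(2πe)` and `e · √e`.
-/

open Real Set Topology MeasureTheory

lemma exp_neg_inv_le {u : ℝ} (hu : 0 < u) : exp (-u⁻¹) ≤ u := by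
  rw [exp_neg, inv_le_comm₀ (exp_pos _) hu]
  linarith [add_one_le_exp u⁻¹]

lemma Psi_of_le {t : ℝ} (ht : t ≤ 1 / 2) : Psi t = 0 := if_pos ht

lemma Psi_of_lt {t : ℝ} (ht : 1 / 2 < t) : Psi t = exp (1 - 1 / (2 * t - 1) ^ 2) :=
  if_neg ht.not_ge

lemma Psi_nonneg (t : ℝ) : 0 ≤ Psi t := by
  unfold Psi; split <;> positivity

lemma Psi_le_exp_one (t : ℝ) : Psi t ≤ exp 1 := by
  unfold Psi; split
  · positivity
  · exact exp_le_exp.2 (by linarith [one_div_nonneg.2 (sq_nonneg (2 * t - 1))])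

lemma Psi_neg_eq_zero_or (a : ℝ) : Psi (-a) = 0 ∨ Psi a = 0 := by
  rcases le_or_gt a (1 / 2) with h | h
  · exact .inr (Psi_of_le h)
  · exact .inl (Psi_of_le (by linarith))

lemma Psi_le_exp_one_mul_sq (t : ℝ) : Psi t ≤ exp 1 * (2 * t - 1) ^ 2 := by
  rcases le_or_gt t (1 / 2) with h | h
  · rw [Psi_of_le h]; positivity
  · have hu : 0 < (2 * t - 1) ^ 2 := by nlinarith
    rw [Psi_of_lt h, sub_eq_add_neg, exp_add, one_div]
    gcongr
    exact exp_neg_inv_le hu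

/-- No case split is needed: `Psi t = 0` for `t ≤ 1 / 2`, in particular at the pole `t = 1 / 2`. -/
noncomputable def psiDeriv (t : ℝ) : ℝ := 4 / (2 * t - 1) ^ 3 * Psi t

lemma hasDerivAt_Psi (t : ℝ) : HasDerivAt Psi (psiDeriv t) t := by
  rcases lt_trichotomy t (1 / 2) with h | rfl | h
  · have hev : Psi =ᶠ[𝓝 t] fun _ => 0 := by
      filter_upwards [eventually_lt_nhds h] with s hs using Psi_of_le hs.le
    rw [psiDeriv, Psi_of_le h.le, mul_zero]
    exact (hasDerivAt_const t 0).congr_of_eventuallyEq hev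
  · -- `Psi` vanishes to second order at `1 / 2`
    rw [psiDeriv, Psi_of_le le_rfl, mul_zero, hasDerivAt_iff_isLittleO]
    simp only [Psi_of_le le_rfl, sub_zero, smul_zero]
    have hO : Psi =O[𝓝 (1 / 2 : ℝ)] fun s => ‖s - 1 / 2‖ ^ 2 :=
      Asymptotics.IsBigO.of_bound (4 * exp 1) <| .of_forall fun s => by
        rw [Real.norm_of_nonneg (Psi_nonneg s), norm_pow, norm_norm]
        have hsq : (2 * s - 1) ^ 2 = 4 * ‖s - 1 / 2‖ ^ 2 := by
          rw [Real.norm_eq_abs, sq_abs]; ring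
        linarith [hsq ▸ Psi_le_exp_one_mul_sq s]
    exact hO.trans_isLittleO (Asymptotics.isLittleO_pow_sub_sub _ one_lt_two)
  · have hu : 0 < 2 * t - 1 := by linarith
    have hev : Psi =ᶠ[𝓝 t] fun s => exp (1 - 1 / (2 * s - 1) ^ 2) := by
      filter_upwards [eventually_gt_nhds h] with s hs using Psi_of_lt hs
    have hlin : HasDerivAt (fun s : ℝ => 2 * s - 1) 2 t := by
      simpa using ((hasDerivAt_id t).const_mul 2).sub_const 1
    have hsq : HasDerivAt (fun s : ℝ => (2 * s - 1) ^ 2) (2 * (2 * t - 1) * 2) t := by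
      simpa using hlin.fun_pow 2
    have hexp := (((hasDerivAt_const t (1 : ℝ)).div hsq (pow_ne_zero 2 hu.ne')).const_sub 1).exp
    simp only [Pi.div_apply] at hexp
    refine (hexp.congr_deriv ?_).congr_of_eventuallyEq hev
    rw [psiDeriv, Psi_of_lt h]
    field_simp
    ring

lemma psiDeriv_nonneg (t : ℝ) : 0 ≤ psiDeriv t := by
  rcases le_or_gt t (1 / 2) with h | h
  · rw [psiDeriv, Psi_of_le h, mul_zero]
  · have : 0 < 2 * t - 1 := by linarith
    exact mul_nonneg (by positivity) (Psi_nonneg t)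

lemma psiDeriv_neg_eq_zero_or (a : ℝ) : psiDeriv (-a) = 0 ∨ psiDeriv a = 0 := by
  rcases Psi_neg_eq_zero_or a with h | h <;> simp [psiDeriv, h]

lemma psiDeriv_sq_le (t : ℝ) : psiDeriv t ^ 2 ≤ 54 / exp 1 := by
  rcases le_or_gt t (1 / 2) with h | h
  · rw [psiDeriv, Psi_of_le h, mul_zero, sq, mul_zero]; positivity
  · set v := (2 * t - 1)⁻¹
    -- `x e^{-x} ≤ e^{-1}` at `x = 2v²/3`, with equality where `Psi'` is maximal
    have hmax : v ^ 2 * exp (-(2 / 3 * v ^ 2)) ≤ 3 / 2 * exp (-1) := by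
      linarith [mul_exp_neg_le_exp_neg_one (2 / 3 * v ^ 2)]
    have hsq : psiDeriv t ^ 2 = 16 * exp 1 ^ 2 * (v ^ 2 * exp (-(2 / 3 * v ^ 2))) ^ 3 := by
      have hexp : exp (1 - v ^ 2) ^ 2 = exp 1 ^ 2 * exp (-(2 / 3 * v ^ 2)) ^ 3 := by
        rw [← exp_nat_mul, ← exp_nat_mul, ← exp_nat_mul, ← exp_add]
        push_cast; ring_nf
      rw [psiDeriv, Psi_of_lt h, show 4 / (2 * t - 1) ^ 3 = 4 * v ^ 3 by simp [v, div_eq_mul_inv],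
        show 1 / (2 * t - 1) ^ 2 = v ^ 2 by simp [v], mul_pow, hexp]
      ring
    calc psiDeriv t ^ 2 = 16 * exp 1 ^ 2 * (v ^ 2 * exp (-(2 / 3 * v ^ 2))) ^ 3 := hsq
      _ ≤ 16 * exp 1 ^ 2 * (3 / 2 * exp (-1)) ^ 3 := by gcongr
      _ = 54 / exp 1 := by rw [exp_neg]; field_simp; ring

lemma psiDeriv_le (t : ℝ) : psiDeriv t ≤ √(54 / exp 1) :=
  Real.le_sqrt_of_sq_le (psiDeriv_sq_le t)

theorem hasDerivAt_integral_Iic {E : Type*} [NormedAddCommGroup E] [NormedSpace ℝ E]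
    [CompleteSpace E] {f : ℝ → E} (hf : Continuous f) (hfi : Integrable f) (t : ℝ) :
    HasDerivAt (fun u => ∫ τ in Iic u, f τ) (f t) t := by
  have hsplit : (fun u => ∫ τ in Iic u, f τ) = fun u => (∫ τ in Iic 0, f τ) + ∫ τ in 0..u, f τ := by
    funext u
    rw [← intervalIntegral.integral_Iic_sub_Iic hfi.integrableOn hfi.integrableOn]
    abel
  rw [hsplit]
  exact (intervalIntegral.integral_hasDerivAt_right hfi.intervalIntegrable
    (hf.stronglyMeasurableAtFilter _ _) hf.continuousAt).const_add _

lemma integrable_exp_neg_sq_div_two : Integrable fun τ : ℝ => exp (-τ ^ 2 / 2) := by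
  simpa [neg_div, div_eq_inv_mul] using integrable_exp_neg_mul_sq (b := 1 / 2) (by norm_num)

lemma integral_exp_neg_sq_div_two : ∫ τ : ℝ, exp (-τ ^ 2 / 2) = √(2 * π) := by
  simpa [neg_div, div_eq_inv_mul] using integral_gaussian (1 / 2)

noncomputable def phiDeriv (t : ℝ) : ℝ := √(exp 1) * exp (-t ^ 2 / 2)

lemma hasDerivAt_Phi (t : ℝ) : HasDerivAt Phi (phiDeriv t) t :=
  (hasDerivAt_integral_Iic (by fun_prop) integrable_exp_neg_sq_div_two t).const_mul _

lemma Phi_nonneg (t : ℝ) : 0 ≤ Phi t :=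
  mul_nonneg (sqrt_nonneg _) (setIntegral_nonneg measurableSet_Iic fun _ _ => (exp_pos _).le)

lemma Phi_le (t : ℝ) : Phi t ≤ √(exp 1) * √(2 * π) := by
  rw [Phi, ← integral_exp_neg_sq_div_two]
  exact mul_le_mul_of_nonneg_left (setIntegral_le_integral integrable_exp_neg_sq_div_two
    (.of_forall fun _ => (exp_pos _).le)) (sqrt_nonneg _)

lemma phiDeriv_nonneg (t : ℝ) : 0 ≤ phiDeriv t := by
  unfold phiDeriv; positivity

lemma phiDeriv_le (t : ℝ) : phiDeriv t ≤ √(exp 1) :=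
  mul_le_of_le_one_right (sqrt_nonneg _) (exp_le_one_iff.2 (by nlinarith [sq_nonneg t]))

noncomputable def chainTerm (a b : ℝ) : ℝ := Psi (-a) * Phi (-b) - Psi a * Phi b

noncomputable def chainTermDerivFst (a b : ℝ) : ℝ :=
  -(psiDeriv (-a) * Phi (-b) + psiDeriv a * Phi b)

noncomputable def chainTermDerivSnd (a b : ℝ) : ℝ :=
  -(Psi (-a) * phiDeriv (-b) + Psi a * phiDeriv b)

theorem hasFDerivAt_chainTerm_comp {E : Type*} [NormedAddCommGroup E] [NormedSpace ℝ E]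
    {f g : E → ℝ} {f' g' : E →L[ℝ] ℝ} {x : E} (hf : HasFDerivAt f f' x) (hg : HasFDerivAt g g' x) :
    HasFDerivAt (fun y => chainTerm (f y) (g y))
      (chainTermDerivFst (f x) (g x) • f' + chainTermDerivSnd (f x) (g x) • g') x := by
  have hPsi := (hasDerivAt_Psi _).comp_hasFDerivAt x hf
  have hPsi_neg := (hasDerivAt_Psi _).comp_hasFDerivAt x hf.neg
  have hPhi := (hasDerivAt_Phi _).comp_hasFDerivAt x hg
  have hPhi_neg := (hasDerivAt_Phi _).comp_hasFDerivAt x hg.neg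
  refine ((hPsi_neg.mul hPhi_neg).sub (hPsi.mul hPhi)).congr_fderiv ?_
  ext y
  simp [chainTermDerivFst, chainTermDerivSnd]
  ring

noncomputable def coordCLM (d i : ℕ) : EuclideanSpace ℝ (Fin d) →L[ℝ] ℝ :=
  if h : i - 1 < d then EuclideanSpace.proj (⟨i - 1, h⟩ : Fin d) else 0

lemma coordCLM_apply (d i : ℕ) (y : EuclideanSpace ℝ (Fin d)) : coordCLM d i y = coord d y i := by
  unfold coordCLM coord
  split <;> simp

lemma coordCLM_single (d i : ℕ) (j : Fin d) :
    coordCLM d i (EuclideanSpace.single j 1) = if i - 1 = j then 1 else 0 := by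
  rw [coordCLM_apply, coord]
  split
  · simp [Fin.ext_iff, eq_comm]
  · grind

lemma Hchain_eq (d : ℕ) :
    Hchain d = fun y => -Psi 1 * Phi (coordCLM d 1 y) +
      ∑ i ∈ Finset.Icc 2 d, chainTerm (coordCLM d (i - 1) y) (coordCLM d i y) := by
  funext y
  simp only [Hchain, coordCLM_apply, chainTerm]

lemma hasFDerivAt_Hchain (d : ℕ) (x : EuclideanSpace ℝ (Fin d)) :
    HasFDerivAt (Hchain d)
      ((-Psi 1 * phiDeriv (coord d x 1)) • coordCLM d 1 +
        ∑ i ∈ Finset.Icc 2 d,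
          (chainTermDerivFst (coord d x (i - 1)) (coord d x i) • coordCLM d (i - 1) +
            chainTermDerivSnd (coord d x (i - 1)) (coord d x i) • coordCLM d i)) x := by
  rw [Hchain_eq]
  have hfirst := ((hasDerivAt_Phi _).comp_hasFDerivAt x (coordCLM d 1).hasFDerivAt).const_mul
    (-Psi 1)
  have hsum := HasFDerivAt.fun_sum fun i (_ : i ∈ Finset.Icc 2 d) =>
    hasFDerivAt_chainTerm_comp (coordCLM d (i - 1)).hasFDerivAt (coordCLM d i).hasFDerivAt (x := x)
  refine (hfirst.add hsum).congr_fderiv ?_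
  simp only [coordCLM_apply, smul_smul]

lemma gradient_apply_eq_fderiv_single {ι : Type*} [Fintype ι] [DecidableEq ι]
    (f : EuclideanSpace ℝ ι → ℝ) (x : EuclideanSpace ℝ ι) (j : ι) :
    gradient f x j = fderiv ℝ f x (EuclideanSpace.single j 1) := by
  rw [← inner_gradient_left, EuclideanSpace.inner_single_right]
  simp

/-- `j : Fin d` is 0-based, so it indexes the coordinate `coord d x (j + 1)`. -/
lemma gradient_Hchain_apply (d : ℕ) (x : EuclideanSpace ℝ (Fin d)) (j : Fin d) :
    gradient (Hchain d) x j =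
      (if (j : ℕ) = 0 then -Psi 1 * phiDeriv (coord d x 1) else 0) +
      (if (j : ℕ) + 2 ≤ d then chainTermDerivFst (coord d x (j + 1)) (coord d x (j + 2)) else 0) +
      (if 1 ≤ (j : ℕ) then chainTermDerivSnd (coord d x j) (coord d x (j + 1)) else 0) := by
  rw [gradient_apply_eq_fderiv_single, (hasFDerivAt_Hchain d x).fderiv]
  simp only [add_apply, sum_apply, smul_apply, coordCLM_single, smul_eq_mul, mul_ite, mul_one,
    mul_zero]
  have hterm : ∀ i ∈ Finset.Icc 2 d,
      ((if i - 1 - 1 = j then chainTermDerivFst (coord d x (i - 1)) (coord d x i) else 0) +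
        if i - 1 = j then chainTermDerivSnd (coord d x (i - 1)) (coord d x i) else 0) =
      ((if i = j + 2 then chainTermDerivFst (coord d x (i - 1)) (coord d x i) else 0) +
        if i = j + 1 then chainTermDerivSnd (coord d x (i - 1)) (coord d x i) else 0) := by
    intro i hi
    rw [Finset.mem_Icc] at hi
    congr 1 <;> congr 1 <;> simp only [eq_iff_iff] <;> omega
  rw [Finset.sum_congr rfl hterm, Finset.sum_add_distrib, Finset.sum_ite_eq', Finset.sum_ite_eq']
  simp only [Finset.mem_Icc, Nat.add_sub_cancel]
  have hfst : (1 - 1 = (j : ℕ)) ↔ (j : ℕ) = 0 := by omega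
  have hsnd : (2 ≤ (j : ℕ) + 2 ∧ (j : ℕ) + 2 ≤ d) ↔ (j : ℕ) + 2 ≤ d := by omega
  have hthd : (2 ≤ (j : ℕ) + 1 ∧ (j : ℕ) + 1 ≤ d) ↔ 1 ≤ (j : ℕ) := by omega
  simp only [hfst, hsnd, hthd, show (j : ℕ) + 2 - 1 = j + 1 by omega, add_assoc]

lemma abs_add_le_of_eq_zero_or {a b C : ℝ} (h : a = 0 ∨ b = 0) (ha : |a| ≤ C) (hb : |b| ≤ C) :
    |a + b| ≤ C := by
  rcases h with rfl | rfl <;> simpa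

lemma abs_psiDeriv_mul_Phi_le (a b : ℝ) :
    |psiDeriv a * Phi b| ≤ √(54 / exp 1) * (√(exp 1) * √(2 * π)) := by
  rw [abs_of_nonneg (mul_nonneg (psiDeriv_nonneg a) (Phi_nonneg b))]
  exact mul_le_mul (psiDeriv_le a) (Phi_le b) (Phi_nonneg b) (sqrt_nonneg _)

lemma abs_Psi_mul_phiDeriv_le (a b : ℝ) : |Psi a * phiDeriv b| ≤ exp 1 * √(exp 1) := by
  rw [abs_of_nonneg (mul_nonneg (Psi_nonneg a) (phiDeriv_nonneg b))]
  exact mul_le_mul (Psi_le_exp_one a) (phiDeriv_le b) (phiDeriv_nonneg b) (exp_pos 1).le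

lemma abs_chainTermDerivFst_le (a b : ℝ) :
    |chainTermDerivFst a b| ≤ √(54 / exp 1) * (√(exp 1) * √(2 * π)) := by
  rw [chainTermDerivFst, abs_neg]
  exact abs_add_le_of_eq_zero_or ((psiDeriv_neg_eq_zero_or a).imp (by simp [·]) (by simp [·]))
    (abs_psiDeriv_mul_Phi_le _ _) (abs_psiDeriv_mul_Phi_le _ _)

lemma abs_chainTermDerivSnd_le (a b : ℝ) : |chainTermDerivSnd a b| ≤ exp 1 * √(exp 1) := by
  rw [chainTermDerivSnd, abs_neg]
  exact abs_add_le_of_eq_zero_or ((Psi_neg_eq_zero_or a).imp (by simp [·]) (by simp [·]))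
    (abs_Psi_mul_phiDeriv_le _ _) (abs_Psi_mul_phiDeriv_le _ _)

/-- The left-hand side is `√(108π) + e^{3/2} ≈ 18.42 + 4.48`. -/
lemma chain_gradient_constant_le :
    √(54 / exp 1) * (√(exp 1) * √(2 * π)) + exp 1 * √(exp 1) ≤ 23 := by
  have he : exp 1 < 2.7182818286 := exp_one_lt_d9
  have hsqrt_e : √(exp 1) ≤ 1.64873 := sqrt_le_iff.2 ⟨by norm_num, by linarith⟩
  have hprod : √(54 / exp 1) * (√(exp 1) * √(2 * π)) = √(108 * π) := by
    rw [← sqrt_mul (by positivity), ← sqrt_mul (by positivity)]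
    congr 1
    field_simp
    ring
  have hsqrt_pi : √(108 * π) ≤ 18.42 := sqrt_le_iff.2 ⟨by norm_num, by linarith [pi_lt_d6]⟩
  nlinarith [sqrt_nonneg (exp 1)]

theorem chain_gradient_sup_norm_bound_general (d : ℕ)
    (x : EuclideanSpace ℝ (Fin d)) :
    ∀ i : Fin d, |gradient (Hchain d) x i| ≤ 23 := by
  intro j
  rw [gradient_Hchain_apply]
  set C₁ := √(54 / exp 1) * (√(exp 1) * √(2 * π))
  set C₂ := exp 1 * √(exp 1)
  have hfst : |if (j : ℕ) + 2 ≤ d then chainTermDerivFst (coord d x (j + 1)) (coord d x (j + 2))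
      else 0| ≤ C₁ := by
    split_ifs
    · exact abs_chainTermDerivFst_le _ _
    · rw [abs_zero]; positivity
  have hrest : |if (j : ℕ) = 0 then -Psi 1 * phiDeriv (coord d x 1) else 0| +
      |if 1 ≤ (j : ℕ) then chainTermDerivSnd (coord d x j) (coord d x (j + 1)) else 0| ≤ C₂ := by
    rcases Nat.eq_zero_or_pos (j : ℕ) with h | h
    · simpa [h, neg_mul, abs_neg] using abs_Psi_mul_phiDeriv_le 1 (coord d x 1)
    · simpa [h.ne', Nat.one_le_iff_ne_zero.2 h.ne'] using abs_chainTermDerivSnd_le _ _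
  calc _ ≤ _ := abs_add_three _ _ _
    _ ≤ C₁ + C₂ := by linarith
    _ ≤ 23 := chain_gradient_constant_le

/-- The gradient of `H_d` is bounded by `23` in the supremum norm:
every coordinate of `∇H_d(x)` has absolute value at most `23`. -/
theorem chain_gradient_sup_norm_bound (d : ℕ) (hd : 1 ≤ d)
    (x : EuclideanSpace ℝ (Fin d)) :
    ∀ i : Fin d, |gradient (Hchain d) x i| ≤ 23 :=
  chain_gradient_sup_norm_bound_general d x
end

section
/- Let d ≥ 1 be an integer, q ∈ (0,1], p ∈ (1,2], and let f : ℝ^d → ℝ be differentiable with prog_0(∇f(x)) ≤ prog_0(x) + 1 for all x ∈ ℝ^d. Let ξ be a Bernoulli random variable with ℙ(ξ = 1) = q, and define the gated stochastic gradient coordinate-wise by (∇̂F(x;ξ))_j = (∇f(x))_j · (1 + 𝟙[j > prog_0(x)](ξ/q − 1)) for j = 1,…,d. Then for every x ∈ ℝ^d the vector ∇̂F(x;ξ) − ∇f(x) has at most one nonzero coordinate, 𝔼[∇̂F(x;ξ)] = ∇f(x), and 𝔼‖∇̂F(x;ξ) − ∇f(x)‖^p ≤ 2‖∇f(x)‖_∞^p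 / q^{p−1}, where ‖·‖ is the Euclidean norm and ‖·‖_∞ the supremum norm. -/
open MeasureTheory

open Function

lemma coord_succ {d : ℕ} (y : EuclideanSpace ℝ (Fin d)) (j : Fin d) :
    coord d y ((j : ℕ) + 1) = y j := by
  simp [coord]

lemma succ_le_prog {d : ℕ} {a : ℝ} {y : EuclideanSpace ℝ (Fin d)} {j : Fin d}
    (hj : a < |y j|) : (j : ℕ) + 1 ≤ prog d a y := by
  classical
  have hmem : (j : ℕ) + 1 ∈ (Finset.Icc 1 d).filter fun i => a < |coord d y i| :=
    Finset.mem_filter.mpr ⟨Finset.mem_Icc.mpr ⟨Nat.le_add_left 1 _, j.2⟩, by rwa [coord_succ]⟩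
  simpa [prog] using Finset.le_sup (f := id) hmem

/-- The part of `y` the gate acts on: its coordinates of 1-based index `> P`. -/
noncomputable def coordTail {d : ℕ} (P : ℕ) (y : EuclideanSpace ℝ (Fin d)) :
    EuclideanSpace ℝ (Fin d) :=
  WithLp.toLp 2 fun j => if P < (j : ℕ) + 1 then y j else 0

lemma coordTail_apply {d : ℕ} (P : ℕ) (y : EuclideanSpace ℝ (Fin d)) (j : Fin d) :
    coordTail P y j = if P < (j : ℕ) + 1 then y j else 0 := rfl

lemma support_coordTail_subsingleton {d P : ℕ} {y : EuclideanSpace ℝ (Fin d)}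
    (hy : prog d 0 y ≤ P + 1) : (support (coordTail P y)).Subsingleton := by
  suffices h : ∀ j, coordTail P y j ≠ 0 → (j : ℕ) = P from
    fun i hi j hj => Fin.ext ((h i hi).trans (h j hj).symm)
  intro j hj
  rw [coordTail_apply] at hj
  split_ifs at hj with hPj
  · have := succ_le_prog (a := 0) (abs_pos.mpr hj)
    omega
  · exact absurd rfl hj

lemma sup_norm_coordTail_le {d : ℕ} (P : ℕ) (y : EuclideanSpace ℝ (Fin d)) :
    ‖WithLp.equiv 2 _ (coordTail P y)‖ ≤ ‖WithLp.equiv 2 (Fin d → ℝ) y‖ := by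
  refine (pi_norm_le_iff_of_nonneg (norm_nonneg _)).mpr fun j => ?_
  change ‖coordTail P y j‖ ≤ _
  rw [coordTail_apply]
  split_ifs
  · exact norm_le_pi_norm (WithLp.equiv 2 _ y) j
  · simp

lemma EuclideanSpace.norm_le_sup_norm_of_support_subsingleton {ι : Type*} [Fintype ι]
    {v : EuclideanSpace ℝ ι} (hv : (support v).Subsingleton) :
    ‖v‖ ≤ ‖WithLp.equiv 2 (ι → ℝ) v‖ := by
  classical
  obtain hempty | ⟨i, hi⟩ := hv.eq_empty_or_singleton
  · have : v = 0 := by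
      ext j
      simpa using congrArg (j ∈ ·) hempty
    simp [this]
  · have : v = PiLp.single 2 i (v i) := by
      ext j
      by_cases hji : j = i
      · simp [hji]
      · simpa [hji] using congrArg (j ∈ ·) hi
    calc ‖v‖ = ‖PiLp.single 2 i (v i)‖ := congrArg _ this
      _ = ‖v i‖ := PiLp.norm_single ..
      _ ≤ _ := norm_le_pi_norm (WithLp.equiv 2 (ι → ℝ) v) i

section ZeroOneValued

variable {Ω : Type*} {mΩ : MeasurableSpace Ω} {μ : Measure Ω} [IsProbabilityMeasure μ]
  {ξ : Ω → ℝ}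

lemma integral_comp_of_zero_one_valued {E : Type*} [NormedAddCommGroup E] [NormedSpace ℝ E]
    [CompleteSpace E] (hmeas : Measurable ξ) (hval : ∀ ω, ξ ω = 0 ∨ ξ ω = 1) (φ : ℝ → E) :
    ∫ ω, φ (ξ ω) ∂μ =
      μ.real {ω | ξ ω = 1} • φ 1 + (1 - μ.real {ω | ξ ω = 1}) • φ 0 := by
  set s := {ω | ξ ω = 1}
  have hs : MeasurableSet s := hmeas (measurableSet_singleton 1)
  have hsplit : (fun ω => φ (ξ ω)) =
      fun ω => s.indicator (fun _ => φ 1) ω + sᶜ.indicator (fun _ => φ 0) ω := by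
    funext ω
    rcases hval ω with h | h <;> simp [s, h]
  rw [hsplit, integral_add ((integrable_const _).indicator hs)
    ((integrable_const _).indicator hs.compl), integral_indicator_const _ hs,
    integral_indicator_const _ hs.compl, probReal_compl_eq_one_sub hs]

variable {q : ℝ} (hmeas : Measurable ξ) (hval : ∀ ω, ξ ω = 0 ∨ ξ ω = 1)
  (hq : μ.real {ω | ξ ω = 1} = q)
include hmeas hval hq

lemma integral_add_div_sub_one_smul {E : Type*} [NormedAddCommGroup E] [NormedSpace ℝ E]
    [CompleteSpace E] (hq0 : q ≠ 0) (g v : E) :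
    ∫ ω, g + (ξ ω / q - 1) • v ∂μ = g := by
  rw [integral_comp_of_zero_one_valued hmeas hval (fun t => g + (t / q - 1) • v), hq]
  match_scalars <;> field_simp <;> ring

lemma integral_abs_div_sub_one_rpow_le (hq0 : 0 < q) (hq1 : q ≤ 1) {p : ℝ} (hp : 1 ≤ p) :
    ∫ ω, |ξ ω / q - 1| ^ p ∂μ ≤ 2 / q ^ (p - 1) := by
  rw [integral_comp_of_zero_one_valued hmeas hval (fun t => |t / q - 1| ^ p), hq]
  have hqp : 0 < q ^ (p - 1) := Real.rpow_pos_of_pos hq0 _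
  have hone : 1 ≤ 1 / q ^ (p - 1) :=
    one_le_one_div hqp (Real.rpow_le_one hq0.le hq1 (by linarith))
  -- `q · ((1 - q) / q) ^ p = (1 - q) ^ p / q ^ (p - 1)`
  have hgate : q * |1 / q - 1| ^ p ≤ 1 / q ^ (p - 1) := by
    have habs : |1 / q - 1| = (1 - q) / q := by
      rw [abs_of_nonneg (by rw [sub_nonneg]; exact one_le_one_div hq0 hq1)]
      field_simp
    have hqpow : q ^ p = q ^ (p - 1) * q := by
      rw [← Real.rpow_add_one hq0.ne', sub_add_cancel]
    rw [habs, Real.div_rpow (by linarith) hq0.le, hqpow]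
    field_simp
    exact Real.rpow_le_one (by linarith) (by linarith) (by linarith)
  simp only [smul_eq_mul, zero_div, zero_sub, abs_neg, abs_one, Real.one_rpow, mul_one]
  linarith [show 2 / q ^ (p - 1) = 1 / q ^ (p - 1) + 1 / q ^ (p - 1) by ring]

end ZeroOneValued

theorem gated_oracle_properties_general {Ω : Type*} {mΩ : MeasurableSpace Ω}
    (μ : Measure Ω) [IsProbabilityMeasure μ]
    (d : ℕ)
    (q p : ℝ) (hq0 : 0 < q) (hq1 : q ≤ 1) (hp1 : 1 < p)
    (f : EuclideanSpace ℝ (Fin d) → ℝ)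
    (hprog : ∀ x, prog d 0 (gradient f x) ≤ prog d 0 x + 1)
    (ξ : Ω → ℝ) (hmeas : Measurable ξ)
    (hval : ∀ ω, ξ ω = 0 ∨ ξ ω = 1)
    (hq : μ {ω | ξ ω = 1} = ENNReal.ofReal q)
    (ghat : EuclideanSpace ℝ (Fin d) → Ω → EuclideanSpace ℝ (Fin d))
    (hghat : ∀ x ω (j : Fin d), ghat x ω j =
      gradient f x j *
        (1 + (if prog d 0 x < (j : ℕ) + 1 then ξ ω / q - 1 else 0))) :
    ∀ x : EuclideanSpace ℝ (Fin d),
      (∀ ω, ∀ i i' : Fin d, (ghat x ω - gradient f x) i ≠ 0 →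
          (ghat x ω - gradient f x) i' ≠ 0 → i = i') ∧
      (∫ ω, ghat x ω ∂μ) = gradient f x ∧
      ∫ ω, ‖ghat x ω - gradient f x‖ ^ p ∂μ ≤
        2 * ‖(WithLp.equiv 2 (Fin d → ℝ)) (gradient f x)‖ ^ p / q ^ (p - 1) := by
  intro x
  set g := gradient f x
  set v := coordTail (prog d 0 x) g
  have hnoise : ∀ ω, ghat x ω - g = (ξ ω / q - 1) • v := fun ω => by
    ext j
    simp only [PiLp.sub_apply, PiLp.smul_apply, smul_eq_mul, hghat, v, coordTail_apply]
    split_ifs <;> ring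
  have hqreal : μ.real {ω | ξ ω = 1} = q := by
    rw [measureReal_def, hq, ENNReal.toReal_ofReal hq0.le]
  have hv : (support v).Subsingleton := support_coordTail_subsingleton (hprog x)
  refine ⟨fun ω i i' hi hi' => ?_, ?_, ?_⟩
  · rw [hnoise] at hi hi'
    exact hv (right_ne_zero_of_mul hi) (right_ne_zero_of_mul hi')
  · simp_rw [fun ω => sub_eq_iff_eq_add'.mp (hnoise ω)]
    exact integral_add_div_sub_one_smul hmeas hval hqreal hq0.ne' g v
  · have hvg : ‖v‖ ^ p ≤ ‖WithLp.equiv 2 (Fin d → ℝ) g‖ ^ p :=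
      Real.rpow_le_rpow (norm_nonneg _) ((EuclideanSpace.norm_le_sup_norm_of_support_subsingleton
        hv).trans (sup_norm_coordTail_le _ g)) (by linarith)
    calc ∫ ω, ‖ghat x ω - g‖ ^ p ∂μ = (∫ ω, |ξ ω / q - 1| ^ p ∂μ) * ‖v‖ ^ p := by
          simp_rw [← integral_mul_const, hnoise, norm_smul, Real.norm_eq_abs,
            Real.mul_rpow (abs_nonneg _) (norm_nonneg _)]
      _ ≤ 2 / q ^ (p - 1) * ‖WithLp.equiv 2 (Fin d → ℝ) g‖ ^ p :=
          mul_le_mul (integral_abs_div_sub_one_rpow_le hmeas hval hqreal hq0 hq1 hp1.le) hvg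
            (by positivity) (by positivity)
      _ = _ := by ring

/-- Properties of the Bernoulli-gated stochastic gradient oracle
`(∇̂F(x;ξ))_j = (∇f(x))_j (1 + 𝟙[j > prog_0(x)](ξ/q − 1))`:
the noise has at most one nonzero coordinate, the oracle is unbiased, and
`𝔼‖∇̂F(x;ξ) − ∇f(x)‖^p ≤ 2‖∇f(x)‖_∞^p / q^{p−1}`. -/
theorem gated_oracle_properties {Ω : Type*} {mΩ : MeasurableSpace Ω}
    (μ : Measure Ω) [IsProbabilityMeasure μ]
    (d : ℕ) (hd : 1 ≤ d)
    (q p : ℝ) (hq0 : 0 < q) (hq1 : q ≤ 1) (hp1 : 1 < p) (hp2 : p ≤ 2)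
    (f : EuclideanSpace ℝ (Fin d) → ℝ) (hdiff : Differentiable ℝ f)
    (hprog : ∀ x, prog d 0 (gradient f x) ≤ prog d 0 x + 1)
    (ξ : Ω → ℝ) (hmeas : Measurable ξ)
    (hval : ∀ ω, ξ ω = 0 ∨ ξ ω = 1)
    (hq : μ {ω | ξ ω = 1} = ENNReal.ofReal q)
    (ghat : EuclideanSpace ℝ (Fin d) → Ω → EuclideanSpace ℝ (Fin d))
    (hghat : ∀ x ω (j : Fin d), ghat x ω j =
      gradient f x j *
        (1 + (if prog d 0 x < (j : ℕ) + 1 then ξ ω / q - 1 else 0))) :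
    ∀ x : EuclideanSpace ℝ (Fin d),
      (∀ ω, ∀ i i' : Fin d, (ghat x ω - gradient f x) i ≠ 0 →
          (ghat x ω - gradient f x) i' ≠ 0 → i = i') ∧
      (∫ ω, ghat x ω ∂μ) = gradient f x ∧
      ∫ ω, ‖ghat x ω - gradient f x‖ ^ p ∂μ ≤
        2 * ‖(WithLp.equiv 2 (Fin d → ℝ)) (gradient f x)‖ ^ p / q ^ (p - 1) :=
  gated_oracle_properties_general (mΩ := mΩ) μ d q p hq0 hq1 hp1 f hprog ξ hmeas hval hq ghat hghat
end
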